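/- Let A be a unital separable simple C*-algebra. If A is asymptotically tracially in the class of separable quasidiagonal C*-algebras, then A is quasidiagonal. -/
import Mathlib


open Filter Topology TopologicalSpace

noncomputable section

/-- An element of a `*`-algebra is *positive* if it is of the form `star b * b`. -/
def IsPosElem {A : Type*} [Mul A] [Star A] (a : A) : Prop :=
  ∃ b : A, a = star b * b

/-- A *projection* in a `*`-algebra is a self-adjoint idempotent element. -/
def IsProjectionElem {A : Type*} [Mul A] [Star A] (p : A) : Prop :=
  p * p = p ∧ star p = p

/-- A (continuous) linear map between C⋆-algebras is *positive* if it maps positive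
elements to positive elements. -/
def IsPositiveMap {A B : Type*} [NonUnitalNormedRing A] [StarRing A] [NormedSpace ℂ A]
    [NonUnitalNormedRing B] [StarRing B] [NormedSpace ℂ B] (φ : A →L[ℂ] B) : Prop :=
  ∀ a : A, IsPosElem a → IsPosElem (φ a)

/-- A (continuous) linear map between C⋆-algebras is *completely positive* if for every
`k ∈ ℕ` the induced map on `k × k` matrices is positive. -/
def IsCompletelyPositive {A B : Type*} [NonUnitalNormedRing A] [StarRing A] [NormedSpace ℂ A]
    [NonUnitalNormedRing B] [StarRing B] [NormedSpace ℂ B] (φ : A →L[ℂ] B) : Prop :=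
  ∀ (k : ℕ) (a : Matrix (Fin k) (Fin k) A), IsPosElem a → IsPosElem (a.map ⇑φ)

/-- A map is *completely positive contractive* (c.p.c.) if it is completely positive and
norm-contractive. -/
def IsCPC {A B : Type*} [NonUnitalNormedRing A] [StarRing A] [NormedSpace ℂ A]
    [NonUnitalNormedRing B] [StarRing B] [NormedSpace ℂ B] (φ : A →L[ℂ] B) : Prop :=
  IsCompletelyPositive φ ∧ ∀ a : A, ‖φ a‖ ≤ ‖a‖

/-- *Cuntz subequivalence* for positive elements: `a ≾ b` iff there is a sequence `xₖ`
with `‖a - xₖ* b xₖ‖ → 0`. -/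
def CuntzLE {A : Type*} [NonUnitalCStarAlgebra A] (a b : A) : Prop :=
  ∃ x : ℕ → A, Tendsto (fun k => a - star (x k) * b * x k) atTop (nhds 0)

/-- A C⋆-algebra is *simple* if its only closed two-sided ideals are `0` and the
algebra itself. -/
def IsSimpleCStarAlgebra (A : Type*) [NonUnitalCStarAlgebra A] : Prop :=
  ∀ I : Set A, IsClosed I → (0 : A) ∈ I →
    (∀ x ∈ I, ∀ y ∈ I, x + y ∈ I) → (∀ (c : ℂ), ∀ x ∈ I, c • x ∈ I) →
    (∀ (a : A), ∀ x ∈ I, a * x ∈ I ∧ x * a ∈ I) →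
    I = {0} ∨ I = Set.univ

/-- A bundled (possibly non-unital) C⋆-algebra; used to quantify over classes of
C⋆-algebras. -/
structure CStarAlg : Type 1 where
  carrier : Type
  [inst : NonUnitalCStarAlgebra carrier]

attribute [instance] CStarAlg.inst

/-- A unital simple C⋆-algebra `A` is *asymptotically tracially in* the class `P` of
C⋆-algebras. -/
def AsympTraciallyIn (A : Type*) [CStarAlgebra A] (P : CStarAlg → Prop) : Prop :=
  ∀ (F : Finset A) (ε : ℝ), 0 < ε → ∀ a : A, IsPosElem a → a ≠ 0 →
    ∃ B : CStarAlg, P B ∧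
      ∃ (α : A →L[ℂ] B.carrier) (β : ℕ → B.carrier →L[ℂ] A) (γ : ℕ → A →L[ℂ] A),
        IsCPC α ∧ (∀ n, IsCPC (β n)) ∧ (∀ n, IsCPC (γ n)) ∧
        (∀ x ∈ F, ∀ n : ℕ, ‖x - (γ n x + β n (α x))‖ < ε) ∧
        (∀ x ∈ F, ∀ y ∈ F, ‖α (x * y) - α x * α y‖ < ε) ∧
        (∀ x ∈ F, |‖α x‖ - ‖x‖| < ε) ∧
        (∀ x y : B.carrier, Tendsto (fun n => ‖β n (x * y) - β n x * β n y‖) atTop (nhds 0)) ∧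
        (∀ x : B.carrier, Tendsto (fun n => ‖β n x‖) atTop (nhds ‖x‖)) ∧
        (∀ n : ℕ, CuntzLE (γ n 1) a)

/-- A separable C⋆-algebra `D` is *quasidiagonal* (Voiculescu's characterization): for
every finite subset `G ⊆ D` and every `ε > 0` there are `k ∈ ℕ` and a c.p.c. map
`φ : D → Mₖ(ℂ)` which is `ε`-almost multiplicative and `ε`-almost isometric on `G`.
Here `Mₖ(ℂ)` is realized as the C⋆-algebra of operators on the `k`-dimensional complex
Hilbert space. -/
def IsQuasidiagonal (D : Type*) [NonUnitalCStarAlgebra D] : Prop :=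
  ∀ (G : Finset D) (ε : ℝ), 0 < ε →
    ∃ (k : ℕ) (φ : D →L[ℂ] (EuclideanSpace ℂ (Fin k) →L[ℂ] EuclideanSpace ℂ (Fin k))),
      IsCPC φ ∧
      (∀ x ∈ G, ∀ y ∈ G, ‖φ (x * y) - φ x * φ y‖ < ε) ∧
      (∀ x ∈ G, ‖x‖ - ε ≤ ‖φ x‖)

/-- The class of separable quasidiagonal C⋆-algebras. -/
def QDClass (B : CStarAlg) : Prop :=
  SeparableSpace B.carrier ∧ IsQuasidiagonal B.carrier

/-- If a unital separable simple C⋆-algebra `A` is asymptotically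
tracially in the class of separable quasidiagonal C⋆-algebras, then `A` is
quasidiagonal. -/
theorem stmt_4 (A : Type) [CStarAlgebra A] [SeparableSpace A]
    (hA : IsSimpleCStarAlgebra A)
    (h : AsympTraciallyIn A QDClass) :
    IsQuasidiagonal A := by
  intro G ε hε
  by_cases htriv : (1 : A) = 0
  · -- degenerate case: A = 0
    refine ⟨0, 0, ⟨?_, ?_⟩, ?_, ?_⟩
    · intro m a _
      refine ⟨0, ?_⟩
      ext i j
      simp
    · intro a
      simp only [ContinuousLinearMap.zero_apply, norm_zero]
      exact norm_nonneg a
    · intro x _ y _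
      simp only [ContinuousLinearMap.zero_apply, zero_mul, sub_zero, norm_zero]
      exact hε
    · intro x _
      have hx0 : x = 0 := by
        calc x = x * 1 := (mul_one x).symm
        _ = 0 := by rw [htriv, mul_zero]
      rw [hx0]
      simp only [map_zero, norm_zero, zero_sub]
      linarith
  · obtain ⟨B, hBqd, α, β, γ, hα, hβ, hγ, hc1, hc2, hc3, hc4, hc5, hc6⟩ :=
      h G (ε / 3) (by linarith) 1 ⟨1, by simp⟩ htriv
    classical
    obtain ⟨k, ψ, hψ, hψmul, hψnorm⟩ := hBqd.2 (G.image α) (ε / 3) (by linarith)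
    refine ⟨k, ψ.comp α, ⟨?_, ?_⟩, ?_, ?_⟩
    · intro m a ha
      have hpos := hψ.1 m (a.map α) (hα.1 m a ha)
      rwa [Matrix.map_map, ← ContinuousLinearMap.coe_comp'] at hpos
    · intro a
      exact le_trans (hψ.2 _) (hα.2 a)
    · intro x hx y hy
      have hm : ‖α (x * y) - α x * α y‖ < ε / 3 := hc2 x hx y hy
      have hmul := hψmul (α x) (Finset.mem_image_of_mem α hx)
        (α y) (Finset.mem_image_of_mem α hy)
      have htri : ‖ψ (α (x * y)) - ψ (α x) * ψ (α y)‖ ≤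
          ‖ψ (α (x * y)) - ψ (α x * α y)‖ + ‖ψ (α x * α y) - ψ (α x) * ψ (α y)‖ :=
        norm_sub_le_norm_sub_add_norm_sub _ _ _
      have h1 : ‖ψ (α (x * y)) - ψ (α x * α y)‖ ≤ ‖α (x * y) - α x * α y‖ := by
        rw [← map_sub]
        exact hψ.2 _
      simp only [ContinuousLinearMap.comp_apply]
      linarith
    · intro x hx
      have h1 : ‖α x‖ - ε / 3 ≤ ‖ψ (α x)‖ := hψnorm (α x) (Finset.mem_image_of_mem α hx)
      have h2 : |‖α x‖ - ‖x‖| < ε / 3 := hc3 x hx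
      have h3 : ‖x‖ - ε / 3 ≤ ‖α x‖ := by
        have := abs_lt.mp h2
        linarith [this.2]
      simp only [ContinuousLinearMap.comp_apply]
      linarith
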